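/- Let n ≥ 1 and let b = (b_1, ..., b_n) be a nonincreasing sequence of nonnegative integers with b_1 ≤ n-1. Call an index i a checking point if i = n, or 1 ≤ i ≤ n-1 and b_i > b_{i+1}. Then b is n-graphical if and only if (1) b_1 + ... + b_n is even, and (2) for every checking point g, H_g - g(g-1) ≤ Σ_{k=g+1}^{n} min(g, b_k), where H_g = b_1 + ... + b_g. -/

import Mathlib

/-!
Write `f g = g (g - 1) + ∑_{k > g} min g (b k) - H g` for the slack of the `g`-th Erdős–Gallai
inequality. Necessity is double counting of the edges leaving the first `g` vertices.

Inside a block `b g = b (g + 1) = c` the increments of `f` are nonincreasing while `g ≤ c` and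
nonnegative once `g > c`. So at each `g` either `f` has not dropped since `g - 1`, or it keeps
dropping up to the end of the block, which is a checking point; by induction on `g` the
inequalities at checking points give all of them.

Sufficiency of all the inequalities is Choudum's induction on the degree sum: lower by one the
last entry `a` of the first block (or `z - 1` if that block ends at `z`) and the last positive
entry `z`. The lowered sequence is still nonincreasing and satisfies the inequalities: where the
slack could drop by two it is even and positive, and where it could drop by one the inequality at
`a` scales down to a strict one. A realization of the lowered sequence becomes one of `b` by
adding the edge `a z`, or, if it is already there, by a 2-switch.
-/

/-- `b 1, …, b n` (1-indexed) is the degree sequence of a simple graph on `n` vertices. -/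
def IsGraphical (n : ℕ) (b : ℕ → ℕ) : Prop :=
  ∃ (G : SimpleGraph (Fin n)) (_ : DecidableRel G.Adj), ∀ i : Fin n, G.degree i = b (i.1 + 1)

open Finset

namespace SimpleGraph

variable {V : Type*} [Fintype V] [DecidableEq V]

theorem sum_degree_le_card_mul_add_sum_min (G : SimpleGraph V) [DecidableRel G.Adj] (S : Finset V) :
    ∑ v ∈ S, G.degree v ≤ #S * (#S - 1) + ∑ w ∈ Sᶜ, min #S (G.degree w) := by
  have hsplit (v : V) : G.degree v = #{w ∈ S | G.Adj v w} + #{w ∈ Sᶜ | G.Adj v w} := by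
    rw [← card_neighborFinset_eq_degree, neighborFinset_eq_filter, ← card_union_of_disjoint
      (disjoint_filter_filter disjoint_compl_right), ← filter_union, union_compl]
  have hinside (v : V) (hv : v ∈ S) : #{w ∈ S | G.Adj v w} ≤ #S - 1 := by
    rw [← card_erase_of_mem hv]
    exact card_le_card fun w hw => by
      rw [mem_filter] at hw
      exact mem_erase.2 ⟨(G.ne_of_adj hw.2).symm, hw.1⟩
  have hacross : ∑ v ∈ S, #{w ∈ Sᶜ | G.Adj v w} = ∑ w ∈ Sᶜ, #{v ∈ S | G.Adj v w} :=
    sum_card_bipartiteAbove_eq_sum_card_bipartiteBelow G.Adj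
  have houtside (w : V) : #{v ∈ S | G.Adj v w} ≤ min #S (G.degree w) := by
    refine le_min (card_filter_le _ _) ?_
    rw [← card_neighborFinset_eq_degree, neighborFinset_eq_filter]
    exact card_le_card fun v hv => by
      simp only [mem_filter, mem_univ, true_and] at hv ⊢
      exact hv.2.symm
  calc ∑ v ∈ S, G.degree v
      = ∑ v ∈ S, #{w ∈ S | G.Adj v w} + ∑ v ∈ S, #{w ∈ Sᶜ | G.Adj v w} := by
        rw [← sum_add_distrib]; exact sum_congr rfl fun v _ => hsplit v
    _ ≤ ∑ _v ∈ S, (#S - 1) + ∑ w ∈ Sᶜ, min #S (G.degree w) := by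
        rw [hacross]
        exact add_le_add (sum_le_sum hinside) (sum_le_sum fun w _ => houtside w)
    _ = #S * (#S - 1) + ∑ w ∈ Sᶜ, min #S (G.degree w) := by rw [sum_const, smul_eq_mul]

theorem degree_edge {s t : V} (h : s ≠ t) (v : V) :
    (edge s t).degree v = (if v = s then 1 else 0) + (if v = t then 1 else 0) := by
  rw [← card_neighborFinset_eq_degree, neighborFinset_eq_filter]
  split_ifs with hs ht ht
  · exact absurd (hs.symm.trans ht) h
  · rw [card_eq_one]; exact ⟨t, by ext; grind⟩
  · rw [card_eq_one]; exact ⟨s, by ext; grind⟩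
  · rw [card_eq_zero]; ext; grind

omit [DecidableEq V] in
theorem degree_sup_of_disjoint {G₁ G₂ : SimpleGraph V} [DecidableRel G₁.Adj] [DecidableRel G₂.Adj]
    (h : Disjoint G₁ G₂) (v : V) : (G₁ ⊔ G₂).degree v = G₁.degree v + G₂.degree v := by
  simp only [← card_neighborFinset_eq_degree, neighborFinset_sup_of_disjoint v h, card_disjUnion]

theorem degree_sup_edge (G : SimpleGraph V) [DecidableRel G.Adj] {s t : V} (h : ¬G.Adj s t)
    (v : V) : (G ⊔ edge s t).degree v = G.degree v + (edge s t).degree v :=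
  degree_sup_of_disjoint ((disjoint_edge _).2 h) v

theorem degree_eq_degree_sdiff_edge_add (G : SimpleGraph V) [DecidableRel G.Adj] {s t : V}
    (h : G.Adj s t) (v : V) : G.degree v = (G \ edge s t).degree v + (edge s t).degree v := by
  rw [← degree_sup_edge _ (by simp [sdiff_adj, edge_adj, h.ne])]
  convert rfl
  exact sdiff_sup_cancel ((edge_le_iff _).2 (Or.inr h))

/-- If `u w` is already an edge, `deg x > deg w` gives a neighbour `y` of `x` outside `N[w]`, and
the switch `x y ↦ u x, w y` raises exactly the degrees of `u` and `w`. -/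
theorem exists_degree_eq_add_edge (G : SimpleGraph V) [DecidableRel G.Adj] {u w x : V}
    (huw : u ≠ w) (hxu : x ≠ u) (hux : ¬G.Adj u x) (hx : x = w ∨ G.degree w < G.degree x) :
    ∃ (H : SimpleGraph V) (_ : DecidableRel H.Adj),
      ∀ v, H.degree v = G.degree v + (edge u w).degree v := by
  by_cases hadj : G.Adj u w
  swap
  · exact ⟨G ⊔ edge u w, inferInstance, degree_sup_edge G hadj⟩
  have hxw : x ≠ w := by rintro rfl; exact hux hadj
  have hlt : #((insert w (G.neighborFinset w)).erase u) < #(G.neighborFinset x) := by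
    rw [card_erase_of_mem (by simp [hadj.symm]), card_insert_of_notMem (by simp),
      add_tsub_cancel_right, card_neighborFinset_eq_degree, card_neighborFinset_eq_degree]
    exact hx.resolve_left hxw
  obtain ⟨y, hxy, hy⟩ := exists_mem_notMem_of_card_lt_card hlt
  rw [mem_neighborFinset] at hxy
  have hyu : y ≠ u := by rintro rfl; exact hux hxy.symm
  have hyw : y ≠ w := by rintro rfl; simp [hyu] at hy
  have hwy : ¬G.Adj w y := fun h => hy (by simp [hyu, h])
  have h₁ : ¬(G \ edge x y).Adj u x := by simp [sdiff_adj, hux]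
  have h₂ : ¬(G \ edge x y ⊔ edge u x).Adj w y := by
    simp only [sup_adj, edge_adj, sdiff_adj]
    grind
  refine ⟨G \ edge x y ⊔ edge u x ⊔ edge w y, inferInstance, fun v => ?_⟩
  rw [degree_sup_edge _ h₂, degree_sup_edge _ h₁, degree_eq_degree_sdiff_edge_add G hxy,
    degree_edge hxu.symm, degree_edge hyw.symm, degree_edge hxy.ne, degree_edge huw]
  omega

end SimpleGraph

namespace ErdosGallai

def headSum (d : ℕ → ℕ) (g : ℕ) : ℕ := ∑ k ∈ Ioc 0 g, d k

def tailMinSum (d : ℕ → ℕ) (n g : ℕ) : ℕ := ∑ k ∈ Ioc g n, min g (d k)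

def IneqAt (d : ℕ → ℕ) (n g : ℕ) : Prop := headSum d g ≤ g * (g - 1) + tailMinSum d n g

def IsCheckingPoint (d : ℕ → ℕ) (n g : ℕ) : Prop :=
  g = n ∨ (1 ≤ g ∧ g ≤ n - 1 ∧ d (g + 1) < d g)

variable {n : ℕ} {d : ℕ → ℕ}

theorem sum_fin_eq_sum_Ioc {M : Type*} [AddCommMonoid M] (n : ℕ) (f : ℕ → M) :
    ∑ v : Fin n, f (v.1 + 1) = ∑ k ∈ Ioc 0 n, f k := by
  rw [Fin.sum_univ_eq_sum_range (fun k => f (k + 1)), range_eq_Ico, sum_Ico_add',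
    Ico_add_one_add_one_eq_Ioc]

theorem sum_fin_filter_eq_sum_Ioc {M : Type*} [AddCommMonoid M] (n : ℕ) (p : ℕ → Prop)
    [DecidablePred p] (f : ℕ → M) :
    ∑ v : Fin n with p (v.1 + 1), f (v.1 + 1) = ∑ k ∈ Ioc 0 n with p k, f k := by
  rw [sum_filter, sum_filter, sum_fin_eq_sum_Ioc n fun k => if p k then f k else 0]

theorem card_filter_fin_le {g : ℕ} (hg : g ≤ n) : #{v : Fin n | v.1 + 1 ≤ g} = g := by
  rw [card_eq_sum_ones, sum_fin_filter_eq_sum_Ioc n (· ≤ g) (fun _ => 1), ← card_eq_sum_ones,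
    show {k ∈ Ioc 0 n | k ≤ g} = Ioc 0 g by ext; simp only [mem_filter, mem_Ioc]; omega,
    Nat.card_Ioc, Nat.sub_zero]

theorem even_headSum_of_isGraphical (h : IsGraphical n d) : Even (headSum d n) := by
  obtain ⟨G, _, hG⟩ := h
  rw [headSum, ← sum_fin_eq_sum_Ioc, ← Fintype.sum_congr _ _ hG, G.sum_degrees_eq_twice_card_edges]
  exact even_two_mul _

theorem ineqAt_of_isGraphical (h : IsGraphical n d) {g : ℕ} (hg : g ≤ n) : IneqAt d n g := by
  obtain ⟨G, _, hG⟩ := h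
  have hhead : (Ioc 0 n).filter (· ≤ g) = Ioc 0 g := by
    ext; simp only [mem_filter, mem_Ioc]; omega
  have htail : (Ioc 0 n).filter (¬ · ≤ g) = Ioc g n := by
    ext; simp only [mem_filter, mem_Ioc]; omega
  have := G.sum_degree_le_card_mul_add_sum_min {v : Fin n | v.1 + 1 ≤ g}
  simp only [hG] at this
  rwa [card_filter_fin_le hg, compl_filter, sum_fin_filter_eq_sum_Ioc n (· ≤ g) d,
    sum_fin_filter_eq_sum_Ioc n (¬ · ≤ g) (fun k => min g (d k)), hhead, htail] at this

theorem ineqAt_zero (d : ℕ → ℕ) (n : ℕ) : IneqAt d n 0 := by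
  simp [IneqAt, headSum]

theorem headSum_add (d : ℕ → ℕ) {g h : ℕ} (hgh : g ≤ h) :
    headSum d h = headSum d g + ∑ k ∈ Ioc g h, d k :=
  (sum_Ioc_consecutive d (Nat.zero_le g) hgh).symm

theorem tailMinSum_eq_add {g h : ℕ} (hgh : g ≤ h) (hhn : h ≤ n) :
    tailMinSum d n g = ∑ k ∈ Ioc g h, min g (d k) + ∑ k ∈ Ioc h n, min g (d k) :=
  (sum_Ioc_consecutive _ hgh hhn).symm

theorem mul_sub_one_add (p q : ℕ) :
    (p + q) * (p + q - 1) = p * (p - 1) + 2 * p * q + q * (q - 1) := by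
  rcases p with _ | p
  · simp
  rcases q with _ | q
  · simp
  rw [show p + 1 + (q + 1) - 1 = p + q + 1 by omega, Nat.add_sub_cancel, Nat.add_sub_cancel]
  ring

theorem ineqAt_succ {g : ℕ} (hgn : g + 1 ≤ n) (hg : IneqAt d n g)
    (hstep : min g (d (g + 1)) + d (g + 1) ≤ 2 * g + #{k ∈ Ioc (g + 1) n | g + 1 ≤ d k}) :
    IneqAt d n (g + 1) := by
  have hhead : headSum d (g + 1) = headSum d g + d (g + 1) := sum_Ioc_succ_top (Nat.zero_le g) d
  have htail : tailMinSum d n g = min g (d (g + 1)) + ∑ k ∈ Ioc (g + 1) n, min g (d k) := by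
    rw [tailMinSum_eq_add (Nat.le_succ g) hgn, Nat.Ioc_succ_singleton, sum_singleton]
  have htail' : tailMinSum d n (g + 1) =
      ∑ k ∈ Ioc (g + 1) n, min g (d k) + #{k ∈ Ioc (g + 1) n | g + 1 ≤ d k} := by
    rw [tailMinSum, card_filter, ← sum_add_distrib]
    exact sum_congr rfl fun k _ => by split_ifs <;> omega
  have hsq := mul_sub_one_add g 1
  unfold IneqAt at hg ⊢
  omega

theorem ineqAt_of_plateau {g h : ℕ} (hgh : g ≤ h) (hhn : h ≤ n)
    (hconst : ∀ k ∈ Ioc g h, d k = d g) (hbig : g + #{k ∈ Ioc g n | g ≤ d k} ≤ d g)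
    (hh : IneqAt d n h) : IneqAt d n g := by
  obtain ⟨u, rfl⟩ : ∃ u, h = g + u := ⟨h - g, by omega⟩
  have hW : u + #{k ∈ Ioc (g + u) n | g + 1 ≤ d k} ≤ #{k ∈ Ioc g n | g ≤ d k} := by
    rw [card_filter, card_filter, ← sum_Ioc_consecutive _ hgh hhn]
    refine add_le_add (le_of_eq ?_) (sum_le_sum fun k _ => by split_ifs <;> omega)
    rw [sum_congr rfl fun k hk => if_pos (by rw [hconst k hk]; omega), sum_const, Nat.card_Ioc,
      smul_eq_mul, mul_one, Nat.add_sub_cancel_left]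
  have hhead : headSum d (g + u) = headSum d g + u * d g := by
    rw [headSum_add d hgh, sum_congr rfl hconst, sum_const, Nat.card_Ioc, smul_eq_mul,
      Nat.add_sub_cancel_left]
  have htail : tailMinSum d n g = u * g + ∑ k ∈ Ioc (g + u) n, min g (d k) := by
    rw [tailMinSum_eq_add hgh hhn,
      sum_congr rfl fun k hk => by rw [hconst k hk, min_eq_left (by omega)], sum_const,
      Nat.card_Ioc, smul_eq_mul, Nat.add_sub_cancel_left]
  have htail' : tailMinSum d n (g + u) ≤
      ∑ k ∈ Ioc (g + u) n, min g (d k) + u * #{k ∈ Ioc (g + u) n | g + 1 ≤ d k} := by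
    rw [tailMinSum, card_filter, mul_sum, ← sum_add_distrib]
    exact sum_le_sum fun k _ => by split_ifs <;> simp only [mul_one, mul_zero] <;> omega
  have hsq := mul_sub_one_add g u
  have hu : u * (u - 1) ≤ u * u := Nat.mul_le_mul_left u (Nat.sub_le u 1)
  have hmul : u * (g + u + #{k ∈ Ioc (g + u) n | g + 1 ≤ d k}) ≤ u * d g :=
    Nat.mul_le_mul_left u (by omega)
  unfold IneqAt at hh ⊢
  nlinarith

theorem exists_isCheckingPoint_plateau (hd : AntitoneOn d (Set.Icc 1 n)) {g : ℕ} (hg : 1 ≤ g)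
    (hgn : g ≤ n) : ∃ h, g ≤ h ∧ h ≤ n ∧ IsCheckingPoint d n h ∧ ∀ k ∈ Ioc g h, d k = d g := by
  induction hm : n - g generalizing g with
  | zero => exact ⟨g, le_rfl, hgn, Or.inl (by omega), by simp⟩
  | succ m ih =>
    by_cases hcp : IsCheckingPoint d n g
    · exact ⟨g, le_rfl, hgn, hcp, by simp⟩
    have hnext : d (g + 1) = d g := by
      refine le_antisymm (hd ⟨hg, hgn⟩ ⟨by omega, by omega⟩ (Nat.le_succ g)) ?_
      by_contra hlt
      exact hcp (Or.inr ⟨hg, by omega, by omega⟩)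
    obtain ⟨h, hgh, hhn, hcph, hconst⟩ := ih (g := g + 1) (by omega) (by omega) (by omega)
    refine ⟨h, by omega, hhn, hcph, fun k hk => ?_⟩
    rcases eq_or_ne k (g + 1) with rfl | hk'
    · exact hnext
    · rw [hconst k (by simp only [mem_Ioc] at hk ⊢; omega), hnext]

theorem ineqAt_of_isCheckingPoint (hd : AntitoneOn d (Set.Icc 1 n))
    (h : ∀ g, IsCheckingPoint d n g → IneqAt d n g) {g : ℕ} (hgn : g ≤ n) : IneqAt d n g := by
  induction g with
  | zero => exact ineqAt_zero d n
  | succ g ih =>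
    by_cases hstep : min g (d (g + 1)) + d (g + 1) ≤ 2 * g + #{k ∈ Ioc (g + 1) n | g + 1 ≤ d k}
    · exact ineqAt_succ hgn (ih (by omega)) hstep
    obtain ⟨h', hgh, hhn, hcp, hconst⟩ := exists_isCheckingPoint_plateau hd (by omega) hgn
    exact ineqAt_of_plateau hgh hhn hconst (by omega) (h h' hcp)

def lowerAt (d : ℕ → ℕ) (a : ℕ) : ℕ → ℕ := Function.update d a (d a - 1)

theorem lowerAt_of_ne (d : ℕ → ℕ) {a k : ℕ} (hk : k ≠ a) : lowerAt d a k = d k :=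
  Function.update_of_ne hk _ _

theorem lowerAt_add_ite {a : ℕ} (hda : 0 < d a) (k : ℕ) :
    lowerAt d a k + (if k = a then 1 else 0) = d k := by
  unfold lowerAt
  split_ifs with hk
  · subst hk; rw [Function.update_self]; omega
  · rw [Function.update_of_ne hk, add_zero]

theorem headSum_lowerAt {a : ℕ} (hda : 0 < d a) (g : ℕ) :
    headSum (lowerAt d a) g + (if a ∈ Ioc 0 g then 1 else 0) = headSum d g := by
  rw [headSum, headSum, ← sum_ite_eq' (Ioc 0 g) a fun _ => 1, ← sum_add_distrib]
  exact sum_congr rfl fun k _ => lowerAt_add_ite hda k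

theorem tailMinSum_le_lowerAt (d : ℕ → ℕ) (n a g : ℕ) :
    tailMinSum d n g ≤ tailMinSum (lowerAt d a) n g + 1 := by
  calc ∑ k ∈ Ioc g n, min g (d k)
      ≤ ∑ k ∈ Ioc g n, (min g (lowerAt d a k) + if k = a then 1 else 0) := by
        refine sum_le_sum fun k _ => ?_
        split_ifs with hk
        · rw [hk, lowerAt, Function.update_self]; omega
        · rw [lowerAt_of_ne d hk, add_zero]
    _ = tailMinSum (lowerAt d a) n g + if a ∈ Ioc g n then 1 else 0 := by
        rw [sum_add_distrib, sum_ite_eq', tailMinSum]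
    _ ≤ tailMinSum (lowerAt d a) n g + 1 := by split_ifs <;> omega

theorem tailMinSum_lowerAt_of_le {a g : ℕ} (hag : a ≤ g) :
    tailMinSum (lowerAt d a) n g = tailMinSum d n g :=
  sum_congr rfl fun k hk => by rw [lowerAt_of_ne d (by simp only [mem_Ioc] at hk; omega)]

theorem tailMinSum_lowerAt_of_lt {a g : ℕ} (hga : g < d a) :
    tailMinSum (lowerAt d a) n g = tailMinSum d n g := by
  refine sum_congr rfl fun k _ => ?_
  rcases eq_or_ne k a with rfl | hk
  · rw [lowerAt, Function.update_self]; omega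
  · rw [lowerAt_of_ne d hk]

theorem headSum_of_const {a : ℕ} (hconst : ∀ k ∈ Ioc 0 a, d k = d a) {g : ℕ} (hga : g ≤ a) :
    headSum d g = g * d a := by
  rw [headSum, sum_congr rfl fun k hk => hconst k (Ioc_subset_Ioc_right hga hk), sum_const,
    Nat.card_Ioc, smul_eq_mul, Nat.sub_zero]

/-- Beyond `g` all entries are at most `g`, so the slack at `g` is `g (g - 1) + H n - 2 H g`: even,
and positive because of the entry `d z`. -/
theorem headSum_add_two_le (hd : AntitoneOn d (Set.Icc 1 n)) (heven : Even (headSum d n))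
    {a z : ℕ} (hconst : ∀ k ∈ Ioc 0 a, d k = d a) (haz : a < z) (hzn : z ≤ n) (hz : 0 < d z)
    {g : ℕ} (hga : g < a) (hag : d a ≤ g) :
    headSum d g + 2 ≤ g * (g - 1) + tailMinSum d n g := by
  have hd1 : d 1 = d a := hconst 1 (mem_Ioc.2 ⟨by omega, by omega⟩)
  have htail : tailMinSum d n g = ∑ k ∈ Ioc g n, d k := by
    refine sum_congr rfl fun k hk => min_eq_right ?_
    simp only [mem_Ioc] at hk
    exact (hd ⟨le_rfl, by omega⟩ ⟨by omega, hk.2⟩ (by omega)).trans (hd1 ▸ hag)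
  have hpair : d a + d z ≤ ∑ k ∈ Ioc g n, d k := by
    rw [← hconst (g + 1) (mem_Ioc.2 ⟨by omega, by omega⟩), ← sum_pair (show g + 1 ≠ z by omega)]
    exact sum_le_sum_of_subset fun k hk => by
      simp only [mem_insert, mem_singleton, mem_Ioc] at hk ⊢; omega
  have hnl : g * d a ≤ g * (g - 1) + d a := by
    rcases g with _ | g
    · simp
    · simp only [Nat.add_sub_cancel]; nlinarith
  have hsq := Nat.even_mul_pred_self g
  rw [headSum_add d (show g ≤ n by omega), headSum_of_const hconst hga.le] at heven
  rw [headSum_of_const hconst hga.le, htail]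
  obtain ⟨p, hp⟩ := heven
  obtain ⟨q, hq⟩ := hsq
  omega

theorem mul_min_le_mul_min {g a : ℕ} (hga : g ≤ a) (x : ℕ) : g * min a x ≤ a * min g x := by
  rcases le_total x g with hx | hx
  · rw [min_eq_right (hx.trans hga), min_eq_right hx]; exact Nat.mul_le_mul_right x hga
  · rw [min_eq_left hx, mul_comm a g]; exact Nat.mul_le_mul_left g (min_le_left a x)

theorem mul_min_lt_mul_min {g a x : ℕ} (hga : g < a) (hx : 0 < x) (hxg : x ≤ g) :
    g * min a x < a * min g x := by
  rw [min_eq_right (hxg.trans hga.le), min_eq_right hxg]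
  exact Nat.mul_lt_mul_of_pos_right hga hx

/-- By `mul_min_le_mul_min`, `min g x / g ≥ min a x / a`, strictly at `x = d z`; this scales the
inequality at `a` down to a strict one at `g`. -/
theorem headSum_lt {a z : ℕ} (hconst : ∀ k ∈ Ioc 0 a, d k = d a) (haz : a < z) (hzn : z ≤ n)
    (hz : 0 < d z) {g : ℕ} (hga : g < a) (hgd : g < d a) (hzg : d z ≤ g) (ha : IneqAt d n a) :
    headSum d g < g * (g - 1) + tailMinSum d n g := by
  have htail : tailMinSum d n g = (a - g) * g + ∑ k ∈ Ioc a n, min g (d k) := by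
    rw [tailMinSum_eq_add hga.le (by omega), sum_congr rfl fun k hk => by
      rw [hconst k (by simp only [mem_Ioc] at hk ⊢; omega), min_eq_left hgd.le], sum_const,
      Nat.card_Ioc, smul_eq_mul]
  have hscale : g * tailMinSum d n a < a * ∑ k ∈ Ioc a n, min g (d k) := by
    rw [tailMinSum, mul_sum, mul_sum]
    exact sum_lt_sum (fun k _ => mul_min_le_mul_min hga.le _)
      ⟨z, mem_Ioc.2 ⟨haz, hzn⟩, mul_min_lt_mul_min hga hz hzg⟩
  have hid : g * (g - 1) + (a - g) * g = g * (a - 1) := by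
    obtain ⟨m, rfl⟩ : ∃ m, a = g + 1 + m := ⟨a - g - 1, by omega⟩
    rcases g with _ | g
    · simp
    · simp only [Nat.add_sub_cancel, show g + 1 + 1 + m - (g + 1) = 1 + m by omega,
        show g + 1 + 1 + m - 1 = g + 1 + m by omega]
      ring
  unfold IneqAt at ha
  rw [headSum_of_const hconst le_rfl] at ha
  rw [headSum_of_const hconst hga.le, htail, ← add_assoc, hid]
  refine Nat.lt_of_mul_lt_mul_left (a := a) ?_
  calc a * (g * d a) = g * (a * d a) := by ring
    _ ≤ g * (a * (a - 1) + tailMinSum d n a) := Nat.mul_le_mul_left g ha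
    _ < a * (g * (a - 1) + ∑ k ∈ Ioc a n, min g (d k)) := by nlinarith

theorem ineqAt_lowerAt_lowerAt (hd : AntitoneOn d (Set.Icc 1 n)) (heven : Even (headSum d n))
    (hineq : ∀ g ≤ n, IneqAt d n g) {a z : ℕ} (ha : 1 ≤ a) (hconst : ∀ k ∈ Ioc 0 a, d k = d a)
    (haz : a < z) (hzn : z ≤ n) (hz : 0 < d z) {g : ℕ} (hgn : g ≤ n) :
    IneqAt (lowerAt (lowerAt d a) z) n g := by
  have hda : 0 < d a := hz.trans_le (hd ⟨ha, by omega⟩ ⟨by omega, hzn⟩ haz.le)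
  have hz' : lowerAt d a z = d z := lowerAt_of_ne d haz.ne'
  have hhead := headSum_lowerAt hda g
  have hhead' := headSum_lowerAt (hz'.symm ▸ hz) g
  have htail := tailMinSum_le_lowerAt d n a g
  have htail' := tailMinSum_le_lowerAt (lowerAt d a) n z g
  have hg := hineq g hgn
  unfold IneqAt at hg ⊢
  simp only [mem_Ioc] at hhead hhead'
  rcases le_or_gt a g with hag | hga
  · rw [tailMinSum_lowerAt_of_le hag] at htail'
    rcases le_or_gt z g with hzg | hgz
    · rw [tailMinSum_lowerAt_of_le hzg]
      split_ifs at hhead hhead' <;> omega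
    · split_ifs at hhead hhead' <;> omega
  rw [if_neg (by omega)] at hhead hhead'
  rcases le_or_gt (d a) g with hag | hgd
  · have := headSum_add_two_le hd heven hconst haz hzn hz hga hag
    omega
  rw [tailMinSum_lowerAt_of_lt hgd] at htail'
  rcases le_or_gt (d z) g with hzg | hgz
  · have := headSum_lt hconst haz hzn hz hga hgd hzg (hineq a (by omega))
    omega
  · rw [tailMinSum_lowerAt_of_lt (hz' ▸ hgz), tailMinSum_lowerAt_of_lt hgd]
    omega

theorem antitoneOn_lowerAt_lowerAt (hd : AntitoneOn d (Set.Icc 1 n)) {a z : ℕ} (haz : a < z)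
    (hdrop : ∀ k ∈ Ioc a n, k ≠ z → d k < d a) (hzero : ∀ k ∈ Ioc z n, d k = 0) :
    AntitoneOn (lowerAt (lowerAt d a) z) (Set.Icc 1 n) := by
  intro i hi j hj hij
  have hdij := hd hi hj hij
  have hdrop' : a < j → j ≠ z → d j < d a := fun h => hdrop j (mem_Ioc.2 ⟨h, hj.2⟩)
  have hzero' : z < j → d j = 0 := fun h => hzero j (mem_Ioc.2 ⟨h, hj.2⟩)
  simp only [lowerAt, Function.update_apply]
  split_ifs <;> subst_vars <;> omega

theorem exists_last_pos (hpos : headSum d n ≠ 0) :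
    ∃ z, 1 ≤ z ∧ z ≤ n ∧ 0 < d z ∧ ∀ k ∈ Ioc z n, d k = 0 := by
  obtain ⟨k, hk, hdk⟩ := exists_ne_zero_of_sum_ne_zero hpos
  rw [mem_Ioc] at hk
  have hk' : 0 < d k := Nat.pos_of_ne_zero hdk
  refine ⟨Nat.findGreatest (fun k => 0 < d k) n, ?_, Nat.findGreatest_le n,
    Nat.findGreatest_spec (P := fun k => 0 < d k) hk.2 hk', fun j hj => ?_⟩
  · exact hk.1.trans_le (Nat.le_findGreatest (P := fun k => 0 < d k) hk.2 hk')
  · rw [mem_Ioc] at hj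
    exact Nat.eq_zero_of_not_pos <|
      Nat.findGreatest_is_greatest (P := fun k => 0 < d k) hj.1 hj.2

theorem exists_end_first_block (hd : AntitoneOn d (Set.Icc 1 n)) (hn : 1 ≤ n) :
    ∃ t, 1 ≤ t ∧ t ≤ n ∧ (∀ k ∈ Ioc 0 t, d k = d 1) ∧ ∀ k ∈ Ioc t n, d k < d 1 := by
  set t := Nat.findGreatest (fun k => d k = d 1) n
  have ht : d t = d 1 := Nat.findGreatest_spec (P := fun k => d k = d 1) hn rfl
  have h1t : 1 ≤ t := Nat.le_findGreatest (P := fun k => d k = d 1) hn rfl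
  have htn : t ≤ n := Nat.findGreatest_le n
  refine ⟨t, h1t, htn, fun k hk => ?_, fun k hk => ?_⟩ <;> rw [mem_Ioc] at hk
  · have := hd ⟨le_rfl, by omega⟩ ⟨by omega, by omega⟩ hk.1
    have := hd ⟨by omega, by omega⟩ ⟨h1t, htn⟩ hk.2
    omega
  · have := hd ⟨le_rfl, by omega⟩ ⟨by omega, hk.2⟩ (by omega)
    have := Nat.findGreatest_is_greatest (P := fun k => d k = d 1) hk.1 hk.2
    omega

theorem lt_of_ineqAt_one (h1 : IneqAt d n 1) {z : ℕ} (hz : 1 ≤ z) (hzn : z ≤ n)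
    (hzero : ∀ k ∈ Ioc z n, d k = 0) : d 1 < z := by
  have htail : tailMinSum d n 1 ≤ z - 1 := by
    rw [tailMinSum_eq_add hz hzn,
      sum_eq_zero (s := Ioc z n) fun k hk => by rw [hzero k hk, _root_.min_zero], add_zero,
      ← Nat.card_Ioc]
    simpa using sum_le_card_nsmul (Ioc 1 z) _ 1 fun k _ => min_le_left 1 (d k)
  have hhead : headSum d 1 = d 1 := by simp [headSum]
  unfold IneqAt at h1
  omega

/-- `a` is the end of the first block of equal entries, moved back to `z - 1` if that block reaches
the last positive entry `z`. -/
theorem exists_lowering_pair (hd : AntitoneOn d (Set.Icc 1 n)) (h1 : IneqAt d n 1)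
    (hpos : headSum d n ≠ 0) :
    ∃ a z, 1 ≤ a ∧ a < z ∧ z ≤ n ∧ 0 < d z ∧ d a < z ∧ (∀ k ∈ Ioc 0 a, d k = d a) ∧
      (∀ k ∈ Ioc a n, k ≠ z → d k < d a) ∧ ∀ k ∈ Ioc z n, d k = 0 := by
  obtain ⟨z, hz1, hzn, hz, hzero⟩ := exists_last_pos hpos
  obtain ⟨t, ht1, htn, hfirst, hafter⟩ := exists_end_first_block hd (hz1.trans hzn)
  have hd1z : d 1 < z := lt_of_ineqAt_one h1 hz1 hzn hzero
  have hzd1 : d z ≤ d 1 := hd ⟨le_rfl, by omega⟩ ⟨hz1, hzn⟩ hz1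
  have htz : t ≤ z := by
    by_contra h
    have := hzero t (mem_Ioc.2 ⟨by omega, htn⟩)
    have := hfirst t (mem_Ioc.2 ⟨by omega, le_rfl⟩)
    omega
  have hda : d (min t (z - 1)) = d 1 := hfirst _ (mem_Ioc.2 ⟨by omega, min_le_left _ _⟩)
  refine ⟨min t (z - 1), z, by omega, by omega, hzn, hz, by omega, fun k hk => ?_,
    fun k hk hkz => ?_, hzero⟩ <;> rw [mem_Ioc] at hk <;> rw [hda]
  · exact hfirst k (mem_Ioc.2 ⟨hk.1, hk.2.trans (min_le_left _ _)⟩)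
  · exact hafter k (mem_Ioc.2 ⟨by omega, hk.2⟩)

theorem isGraphical_of_lowerAt_lowerAt (hd : AntitoneOn d (Set.Icc 1 n)) {a z : ℕ} (ha : 1 ≤ a)
    (haz : a < z) (hzn : z ≤ n) (hz : 0 < d z) (hdaz : d a < z)
    (h : IsGraphical n (lowerAt (lowerAt d a) z)) : IsGraphical n d := by
  obtain ⟨G, _, hG⟩ := h
  have hda : 0 < d a := hz.trans_le (hd ⟨ha, by omega⟩ ⟨by omega, hzn⟩ haz.le)
  have hz' : 0 < lowerAt d a z := by rwa [lowerAt_of_ne d haz.ne']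
  obtain ⟨T, hTa⟩ : ∃ T : Fin n, T.1 + 1 = a := ⟨⟨a - 1, by omega⟩, Nat.sub_add_cancel ha⟩
  obtain ⟨Z, hZz⟩ : ∃ Z : Fin n, Z.1 + 1 = z :=
    ⟨⟨z - 1, by omega⟩, Nat.sub_add_cancel (ha.trans haz.le)⟩
  have hT (v : Fin n) : v = T ↔ v.1 + 1 = a := by rw [Fin.ext_iff]; omega
  have hZ (v : Fin n) : v = Z ↔ v.1 + 1 = z := by rw [Fin.ext_iff]; omega
  have hTZ : T ≠ Z := by rw [ne_eq, hZ]; omega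
  have hdeg (v : Fin n) : G.degree v + (SimpleGraph.edge T Z).degree v = d (v.1 + 1) := by
    rw [hG, SimpleGraph.degree_edge hTZ, ← lowerAt_add_ite hda, ← lowerAt_add_ite hz']
    simp only [hT, hZ]
    omega
  have hcard : #(insert T (G.neighborFinset T)) < #{v : Fin n | v.1 + 1 ≤ z} := by
    have := hdeg T
    rw [SimpleGraph.degree_edge hTZ, if_pos rfl, if_neg hTZ, hTa] at this
    rw [card_filter_fin_le hzn]
    exact (card_insert_le _ _).trans_lt (by rw [G.card_neighborFinset_eq_degree]; omega)
  obtain ⟨x, hxz, hxT⟩ := exists_mem_notMem_of_card_lt_card hcard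
  rw [mem_insert, not_or, G.mem_neighborFinset] at hxT
  rw [mem_filter] at hxz
  obtain ⟨H, _, hH⟩ := G.exists_degree_eq_add_edge hTZ hxT.1 hxT.2 <| by
    refine or_iff_not_imp_left.2 fun hxZ => ?_
    have hx := hdeg x
    have hZdeg := hdeg Z
    rw [SimpleGraph.degree_edge hTZ, if_neg hxT.1, if_neg hxZ] at hx
    rw [SimpleGraph.degree_edge hTZ, if_neg hTZ.symm, if_pos rfl, hZz] at hZdeg
    have := hd ⟨by omega, by omega⟩ ⟨by omega, hzn⟩ hxz.2
    omega
  exact ⟨H, inferInstance, fun v => (hH v).trans (hdeg v)⟩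

theorem isGraphical_of_ineqAt (hd : AntitoneOn d (Set.Icc 1 n)) (hineq : ∀ g ≤ n, IneqAt d n g)
    (heven : Even (headSum d n)) : IsGraphical n d := by
  induction hS : headSum d n using Nat.strong_induction_on generalizing d with
  | _ S ih =>
  rcases eq_or_ne S 0 with rfl | hS0
  · refine ⟨⊥, inferInstance, fun v => ?_⟩
    rw [SimpleGraph.bot_degree]
    exact ((sum_eq_zero_iff.1 hS) (v.1 + 1) (by simp)).symm
  have hn : 1 ≤ n :=
    Nat.pos_of_ne_zero fun hn => hS0 (by rw [← hS, hn, headSum, Ioc_self, sum_empty])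
  obtain ⟨a, z, ha, haz, hzn, hz, hdaz, hconst, hdrop, hzero⟩ :=
    exists_lowering_pair hd (hineq 1 hn) (hS ▸ hS0)
  have hda : 0 < d a := hz.trans_le (hd ⟨ha, by omega⟩ ⟨by omega, hzn⟩ haz.le)
  have hsum : headSum (lowerAt (lowerAt d a) z) n + 2 = S := by
    have h₁ := headSum_lowerAt hda n
    have h₂ := headSum_lowerAt (show 0 < lowerAt d a z by rwa [lowerAt_of_ne d haz.ne']) n
    rw [if_pos (mem_Ioc.2 ⟨by omega, by omega⟩)] at h₁ h₂
    omega
  obtain ⟨m, hm⟩ := hS ▸ heven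
  exact isGraphical_of_lowerAt_lowerAt hd ha haz hzn hz hdaz <|
    ih _ (by omega) (antitoneOn_lowerAt_lowerAt hd haz hdrop hzero)
      (fun g hg => ineqAt_lowerAt_lowerAt hd heven hineq ha hconst haz hzn hz hg)
      ⟨m - 1, by omega⟩ rfl

theorem IsCheckingPoint.le {g : ℕ} (h : IsCheckingPoint d n g) : g ≤ n := by
  rcases h with rfl | ⟨_, h, _⟩ <;> omega

theorem headSum_eq_sum_Icc (d : ℕ → ℕ) (g : ℕ) : headSum d g = ∑ k ∈ Icc 1 g, d k := by
  rw [headSum, ← Icc_add_one_left_eq_Ioc, zero_add]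

theorem ineqAt_iff (d : ℕ → ℕ) (n g : ℕ) :
    IneqAt d n g ↔ (∑ k ∈ Icc 1 g, d k) - g * (g - 1) ≤ ∑ k ∈ Icc (g + 1) n, min g (d k) := by
  rw [IneqAt, tailMinSum, Icc_add_one_left_eq_Ioc, headSum_eq_sum_Icc, Nat.sub_le_iff_le_add']

end ErdosGallai

open ErdosGallai in
theorem erdos_gallai_jumping_general (n : ℕ) (b : ℕ → ℕ)
    (hmono : ∀ i j, 1 ≤ i → i ≤ j → j ≤ n → b j ≤ b i) :
    IsGraphical n b ↔
      (Even (∑ k ∈ Finset.Icc 1 n, b k) ∧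
        ∀ g, (g = n ∨ (1 ≤ g ∧ g ≤ n - 1 ∧ b (g + 1) < b g)) →
          (∑ k ∈ Finset.Icc 1 g, b k) - g * (g - 1) ≤
            ∑ k ∈ Finset.Icc (g + 1) n, min g (b k)) := by
  have hd : AntitoneOn b (Set.Icc 1 n) := fun i hi j hj hij => hmono i j hi.1 hij hj.2
  constructor
  · intro h
    refine ⟨headSum_eq_sum_Icc b n ▸ even_headSum_of_isGraphical h, fun g hg => ?_⟩
    exact (ineqAt_iff b n g).1 (ineqAt_of_isGraphical h (IsCheckingPoint.le hg))
  · rintro ⟨heven, hcp⟩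
    refine isGraphical_of_ineqAt hd (fun g hg => ?_) (headSum_eq_sum_Icc b n ▸ heven)
    exact ineqAt_of_isCheckingPoint hd (fun k hk => (ineqAt_iff b n k).2 (hcp k hk)) hg

/-- The jumping Erdős–Gallai criterion: it suffices to check the Erdős–Gallai
inequalities at the checking points. -/
theorem erdos_gallai_jumping (n : ℕ) (hn : 1 ≤ n) (b : ℕ → ℕ)
    (hmono : ∀ i j, 1 ≤ i → i ≤ j → j ≤ n → b j ≤ b i)
    (hbound : b 1 ≤ n - 1) :
    IsGraphical n b ↔
      (Even (∑ k ∈ Finset.Icc 1 n, b k) ∧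
        ∀ g, (g = n ∨ (1 ≤ g ∧ g ≤ n - 1 ∧ b (g + 1) < b g)) →
          (∑ k ∈ Finset.Icc 1 g, b k) - g * (g - 1) ≤
            ∑ k ∈ Finset.Icc (g + 1) n, min g (b k)) :=
  erdos_gallai_jumping_general n b hmono
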